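/- arXiv:1812.08037 — 2 statements merged into one kernel-verified Lean document; each statement's English description precedes it below -/
import Mathlib

section
/- Let α ∈ [0,1], a, b ≥ 0, r ∈ [−1,1], and assume 2ra ≥ b. Then a^(2α) − (a² − 2rab + b²)^α ≤ |ra|^(2α) − |ra − b|^(2α). -/
/-!
Write `a² = c + d + e` with `c = (ra - b)²`, `d = b (2ra - b)` and `e = a² (1 - r²)`, all
nonnegative; then `(ra)² = c + d` and `a² - 2rab + b² = c + e`. The claim becomes
`(c + d + e)^α + c^α ≤ (c + d)^α + (c + e)^α`, which holds because the increments of the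
concave function `t ↦ t^α` decrease.
-/

theorem ConcaveOn.map_add_add_le {𝕜 β : Type*} [Field 𝕜] [LinearOrder 𝕜] [IsStrictOrderedRing 𝕜]
    [AddCommGroup β] [PartialOrder β] [IsOrderedAddMonoid β] [Module 𝕜 β]
    {s : Set 𝕜} {f : 𝕜 → β} (hf : ConcaveOn 𝕜 s f) {x d e : 𝕜} (hx : x ∈ s)
    (hxde : x + d + e ∈ s) (hd : 0 ≤ d) (he : 0 ≤ e) :
    f (x + d + e) + f x ≤ f (x + d) + f (x + e) := by
  rcases (add_nonneg hd he).eq_or_lt with hde | hde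
  · obtain ⟨rfl, rfl⟩ : d = 0 ∧ e = 0 := ⟨by linarith, by linarith⟩
    simp
  have hd' : d / (d + e) + e / (d + e) = 1 := by field_simp
  have he' : e / (d + e) + d / (d + e) = 1 := by rw [add_comm, hd']
  have hfd := hf.2 hxde hx (div_nonneg hd hde.le) (div_nonneg he hde.le) hd'
  have hfe := hf.2 hxde hx (div_nonneg he hde.le) (div_nonneg hd hde.le) he'
  have hcd : (d / (d + e)) • (x + d + e) + (e / (d + e)) • x = x + d := by
    simp only [smul_eq_mul]; field_simp; ring
  have hce : (e / (d + e)) • (x + d + e) + (d / (d + e)) • x = x + e := by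
    simp only [smul_eq_mul]; field_simp; ring
  rw [hcd] at hfd
  rw [hce] at hfe
  calc f (x + d + e) + f x
      = ((d / (d + e)) • f (x + d + e) + (e / (d + e)) • f x) +
          ((e / (d + e)) • f (x + d + e) + (d / (d + e)) • f x) := by
        rw [add_add_add_comm, ← add_smul, add_comm ((e / (d + e)) • f x), ← add_smul, hd',
          one_smul, one_smul]
    _ ≤ f (x + d) + f (x + e) := add_le_add hfd hfe

theorem Real.add_add_rpow_add_rpow_le {α c d e : ℝ} (hα0 : 0 ≤ α) (hα1 : α ≤ 1)
    (hc : 0 ≤ c) (hd : 0 ≤ d) (he : 0 ≤ e) :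
    (c + d + e) ^ α + c ^ α ≤ (c + d) ^ α + (c + e) ^ α :=
  (Real.concaveOn_rpow hα0 hα1).map_add_add_le hc (by simp only [Set.mem_Ici]; positivity) hd he

theorem Real.abs_rpow_two_mul (t α : ℝ) : |t| ^ (2 * α) = (t ^ 2) ^ α := by
  rw [Real.rpow_mul (abs_nonneg t), Real.rpow_two, sq_abs]

theorem stmt_12 (α a b r : ℝ) (hα0 : 0 ≤ α) (hα1 : α ≤ 1) (ha : 0 ≤ a) (hb : 0 ≤ b)
    (hr1 : -1 ≤ r) (hr2 : r ≤ 1) (hrab : b ≤ 2 * r * a) :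
    a ^ (2 * α) - (a ^ 2 - 2 * r * a * b + b ^ 2) ^ α ≤
      |r * a| ^ (2 * α) - |r * a - b| ^ (2 * α) := by
  have key := Real.add_add_rpow_add_rpow_le hα0 hα1 (sq_nonneg (r * a - b))
    (mul_nonneg hb (sub_nonneg.2 hrab))
    (mul_nonneg (sq_nonneg a) (by nlinarith : 0 ≤ 1 - r ^ 2))
  have h_sum : (r * a - b) ^ 2 + b * (2 * r * a - b) + a ^ 2 * (1 - r ^ 2) = a ^ 2 := by ring
  have h_ra : (r * a - b) ^ 2 + b * (2 * r * a - b) = (r * a) ^ 2 := by ring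
  have h_cos : (r * a - b) ^ 2 + a ^ 2 * (1 - r ^ 2) = a ^ 2 - 2 * r * a * b + b ^ 2 := by ring
  rw [h_sum, h_ra, h_cos, ← Real.abs_rpow_two_mul, ← Real.abs_rpow_two_mul,
    ← Real.abs_rpow_two_mul, abs_of_nonneg ha] at key
  linarith
end

section
/- Let (Q, b) be a pseudo-metric space, m ∈ Q a fixed point, c(y,q) a cost function, a a data distance, and suppose the weak quadruple inequality c(y,q) − c(z,q) − c(y,p) + c(z,p) ≤ a(y,z)·b(q,p) holds for all y,z,q,p ∈ Q. Let ξ ∈ [0,1]. Then for all y, z, q, p ∈ Q with b(q,m) > 0 and b(p,m) > 0: (c(y,q) − c(y,m) − c(z,q) + c(z,m))/b(q,m)^ξ − (c(y,p) − c(y,m) − c(z,p) + c(z,m))/b(p,m)^ξ ≤ 2^ξ · a(y,z) · b(q,p)^(1−ξ). -/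
/-!
Write `g_q = c y q - c y m - c z q + c z m`, `B_q = b q m`, `d = b q p` and `A = a y z`.
The quadruple inequality gives `g_q ≤ A B_q`, `-g_p ≤ A B_p` and `g_q - g_p ≤ A d`, and the
triangle inequality relates `B_q`, `B_p`, `d`; what is left is an inequality between reals.
By symmetry `B_q ≤ B_p`, and then
`g_q / B_q^ξ - g_p / B_p^ξ = g_q (B_q^{-ξ} - B_p^{-ξ}) + (g_q - g_p) B_p^{-ξ}
  ≤ A (B_q^{1-ξ} + (d - B_q) B_p^{-ξ})`.
If `B_q ≤ d` the bracket is at most `B_q^{1-ξ} + (d - B_q)^{1-ξ} ≤ 2^ξ d^{1-ξ}` by concavity of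
`t ↦ t^{1-ξ}`. If `d < B_q`, weighted AM-GM bounds it by `(1 + ξ) d / (B_q + d)^ξ`, and
`(B_q + d)^ξ ≥ (2d)^ξ` together with `1 + ξ ≤ 4^ξ` concludes.
-/

open Real

lemma one_add_le_four_rpow {ξ : ℝ} (hξ : 0 ≤ ξ) : 1 + ξ ≤ (4 : ℝ) ^ ξ := by
  have hlog : 1 ≤ log 4 := by
    rw [le_log_iff_exp_le (by norm_num)]
    exact exp_one_lt_d9.le.trans (by norm_num)
  calc 1 + ξ ≤ log 4 * ξ + 1 := by nlinarith
    _ ≤ exp (log 4 * ξ) := add_one_le_exp _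
    _ = (4 : ℝ) ^ ξ := (rpow_def_of_pos (by norm_num) ξ).symm

lemma rpow_add_rpow_le_two_rpow_mul_add_rpow {x y s : ℝ} (hx : 0 ≤ x) (hy : 0 ≤ y)
    (hs0 : 0 ≤ s) (hs1 : s ≤ 1) : x ^ s + y ^ s ≤ 2 ^ (1 - s) * (x + y) ^ s := by
  have hmid := (concaveOn_rpow hs0 hs1).2 (Set.mem_Ici.mpr hx) (Set.mem_Ici.mpr hy)
    (by norm_num : (0 : ℝ) ≤ 1 / 2) (by norm_num : (0 : ℝ) ≤ 1 / 2) (by norm_num)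
  simp only [smul_eq_mul] at hmid
  rw [← mul_add, ← mul_add, mul_rpow (by norm_num) (by linarith),
    div_rpow (by norm_num) (by norm_num), one_rpow] at hmid
  have hsplit : (2 : ℝ) ^ (1 - s) = 2 / 2 ^ s := by rw [rpow_sub (by norm_num), rpow_one]
  rw [hsplit, div_eq_mul_inv, mul_assoc, ← one_div]
  linarith

lemma div_rpow_le_rpow_one_sub {u v ξ : ℝ} (hu : 0 ≤ u) (huv : u ≤ v) (hξ : 0 ≤ ξ) :
    u / v ^ ξ ≤ u ^ (1 - ξ) := by
  rcases hu.eq_or_lt with rfl | hu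
  · simp [rpow_nonneg le_rfl]
  calc u / v ^ ξ ≤ u / u ^ ξ := by gcongr
    _ = u ^ (1 - ξ) := by rw [rpow_sub hu, rpow_one]

lemma rpow_one_sub_add_sub_div_rpow_le_of_le {ξ Bq Bp d : ℝ} (hξ0 : 0 ≤ ξ) (hξ1 : ξ ≤ 1)
    (hBq : 0 ≤ Bq) (hBqd : Bq ≤ d) (hd : d ≤ Bq + Bp) :
    Bq ^ (1 - ξ) + (d - Bq) / Bp ^ ξ ≤ 2 ^ ξ * d ^ (1 - ξ) := by
  have hdiv : (d - Bq) / Bp ^ ξ ≤ (d - Bq) ^ (1 - ξ) :=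
    div_rpow_le_rpow_one_sub (by linarith) (by linarith) hξ0
  have hmean := rpow_add_rpow_le_two_rpow_mul_add_rpow hBq (sub_nonneg.2 hBqd)
    (sub_nonneg.2 hξ1) (sub_le_self 1 hξ0)
  rw [sub_sub_cancel, add_sub_cancel] at hmean
  linarith

lemma rpow_one_sub_add_sub_div_rpow_le_of_ge {ξ Bq Bp d : ℝ} (hξ0 : 0 ≤ ξ) (hξ1 : ξ ≤ 1)
    (hBp : 0 < Bp) (hd : 0 ≤ d) (hdBq : d ≤ Bq) (hBp_le : Bp ≤ Bq + d) :
    Bq ^ (1 - ξ) + (d - Bq) / Bp ^ ξ ≤ 2 ^ ξ * d ^ (1 - ξ) := by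
  set K := (Bq + d) ^ ξ
  have hK : 0 < K := rpow_pos_of_pos (by linarith) ξ
  have hBpK : (d - Bq) / Bp ^ ξ ≤ (d - Bq) / K := by
    rw [← neg_sub Bq d, neg_div, neg_div, neg_le_neg_iff]
    exact div_le_div_of_nonneg_left (sub_nonneg.2 hdBq) (by positivity)
      (rpow_le_rpow hBp.le hBp_le hξ0)
  have hamgm : Bq ^ (1 - ξ) * K ≤ Bq + ξ * d := by
    have := geom_mean_le_arith_mean2_weighted (sub_nonneg.2 hξ1) hξ0 (hd.trans hdBq)
      (by linarith : 0 ≤ Bq + d) (sub_add_cancel 1 ξ)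
    linarith
  have htwo : 2 ^ ξ * d ^ ξ ≤ K := by
    rw [← mul_rpow (by norm_num) hd]
    exact rpow_le_rpow (by positivity) (by linarith) hξ0
  have hsplit : d ^ (1 - ξ) * d ^ ξ = d := by
    rw [← rpow_add' hd (show 1 - ξ + ξ ≠ 0 by norm_num), sub_add_cancel, rpow_one]
  have hfour : (1 + ξ) * d ≤ 2 ^ ξ * d ^ (1 - ξ) * K :=
    calc (1 + ξ) * d ≤ 4 ^ ξ * d := mul_le_mul_of_nonneg_right (one_add_le_four_rpow hξ0) hd
      _ = 2 ^ ξ * d ^ (1 - ξ) * (2 ^ ξ * d ^ ξ) := by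
        rw [show (4 : ℝ) = 2 * 2 by norm_num, mul_rpow (by norm_num) (by norm_num)]
        linear_combination -(2 ^ ξ * 2 ^ ξ : ℝ) * hsplit
      _ ≤ 2 ^ ξ * d ^ (1 - ξ) * K := by gcongr
  calc Bq ^ (1 - ξ) + (d - Bq) / Bp ^ ξ ≤ Bq ^ (1 - ξ) + (d - Bq) / K := by linarith
    _ = (Bq ^ (1 - ξ) * K + (d - Bq)) / K := by field_simp
    _ ≤ (1 + ξ) * d / K := by gcongr; linarith
    _ ≤ 2 ^ ξ * d ^ (1 - ξ) := (div_le_iff₀ hK).2 hfour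

lemma sub_div_rpow_le_of_le {ξ A Bq Bp d gq gp : ℝ} (hξ0 : 0 ≤ ξ) (hξ1 : ξ ≤ 1) (hA : 0 ≤ A)
    (hBq : 0 < Bq) (hle : Bq ≤ Bp) (hBp_le : Bp ≤ Bq + d) (hd : d ≤ Bq + Bp)
    (hq : gq ≤ A * Bq) (hqp : gq - gp ≤ A * d) :
    gq / Bq ^ ξ - gp / Bp ^ ξ ≤ 2 ^ ξ * A * d ^ (1 - ξ) := by
  have hBp : 0 < Bp := hBq.trans_le hle
  have hdecr : 0 ≤ (Bq ^ ξ)⁻¹ - (Bp ^ ξ)⁻¹ := by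
    rw [sub_nonneg]
    gcongr
  have hbracket : Bq ^ (1 - ξ) + (d - Bq) / Bp ^ ξ ≤ 2 ^ ξ * d ^ (1 - ξ) := by
    rcases le_total Bq d with hBqd | hdBq
    · exact rpow_one_sub_add_sub_div_rpow_le_of_le hξ0 hξ1 hBq.le hBqd hd
    · exact rpow_one_sub_add_sub_div_rpow_le_of_ge hξ0 hξ1 hBp (by linarith) hdBq hBp_le
  calc gq / Bq ^ ξ - gp / Bp ^ ξ
      = gq * ((Bq ^ ξ)⁻¹ - (Bp ^ ξ)⁻¹) + (gq - gp) * (Bp ^ ξ)⁻¹ := by ring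
    _ ≤ A * Bq * ((Bq ^ ξ)⁻¹ - (Bp ^ ξ)⁻¹) + A * d * (Bp ^ ξ)⁻¹ :=
      add_le_add (mul_le_mul_of_nonneg_right hq hdecr)
        (mul_le_mul_of_nonneg_right hqp (by positivity))
    _ = A * (Bq ^ (1 - ξ) + (d - Bq) / Bp ^ ξ) := by rw [rpow_sub hBq, rpow_one]; ring
    _ ≤ A * (2 ^ ξ * d ^ (1 - ξ)) := mul_le_mul_of_nonneg_left hbracket hA
    _ = 2 ^ ξ * A * d ^ (1 - ξ) := by ring

lemma sub_div_rpow_le {ξ A Bq Bp d gq gp : ℝ} (hξ0 : 0 ≤ ξ) (hξ1 : ξ ≤ 1) (hA : 0 ≤ A)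
    (hBq : 0 < Bq) (hBp : 0 < Bp) (hBq_le : Bq ≤ Bp + d) (hBp_le : Bp ≤ Bq + d)
    (hd : d ≤ Bq + Bp) (hq : gq ≤ A * Bq) (hp : -gp ≤ A * Bp) (hqp : gq - gp ≤ A * d) :
    gq / Bq ^ ξ - gp / Bp ^ ξ ≤ 2 ^ ξ * A * d ^ (1 - ξ) := by
  rcases le_total Bq Bp with hle | hle
  · exact sub_div_rpow_le_of_le hξ0 hξ1 hA hBq hle hBp_le hd hq hqp
  · calc gq / Bq ^ ξ - gp / Bp ^ ξ = -gp / Bp ^ ξ - -gq / Bq ^ ξ := by ring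
      _ ≤ 2 ^ ξ * A * d ^ (1 - ξ) :=
        sub_div_rpow_le_of_le hξ0 hξ1 hA hBp hle hBq_le (by linarith) hp (by linarith)

theorem stmt_18_general {Q : Type*} (b a : Q → Q → ℝ) (c : Q → Q → ℝ) (m : Q) (ξ : ℝ)
    (hb_symm : ∀ q p, b q p = b p q)
    (hb_tri : ∀ q p o, b q p ≤ b q o + b o p)
    (ha_nonneg : ∀ y z, 0 ≤ a y z)
    (hquad : ∀ y z q p, c y q - c z q - c y p + c z p ≤ a y z * b q p)
    (hξ0 : 0 ≤ ξ) (hξ1 : ξ ≤ 1) :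
    ∀ y z q p, 0 < b q m → 0 < b p m →
      (c y q - c y m - c z q + c z m) / b q m ^ ξ
        - (c y p - c y m - c z p + c z m) / b p m ^ ξ
        ≤ 2 ^ ξ * a y z * b q p ^ (1 - ξ) := by
  intro y z q p hq hp
  have hqm := hb_tri q m p
  have hpm := hb_tri p m q
  have hqp := hb_tri q p m
  have hquad_mp := hquad y z m p
  rw [hb_symm p q] at hpm
  rw [hb_symm m p] at hqp hquad_mp
  exact sub_div_rpow_le hξ0 hξ1 (ha_nonneg y z) hq hp (by linarith) (by linarith) hqp
    (by linarith [hquad y z q m]) (by linarith) (by linarith [hquad y z q p])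

theorem stmt_18 {Q : Type*} (b a : Q → Q → ℝ) (c : Q → Q → ℝ) (m : Q) (ξ : ℝ)
    (hb_nonneg : ∀ q p, 0 ≤ b q p) (hb_symm : ∀ q p, b q p = b p q)
    (hb_refl : ∀ q, b q q = 0)
    (hb_tri : ∀ q p o, b q p ≤ b q o + b o p)
    (ha_nonneg : ∀ y z, 0 ≤ a y z) (ha_symm : ∀ y z, a y z = a z y)
    (hquad : ∀ y z q p, c y q - c z q - c y p + c z p ≤ a y z * b q p)
    (hξ0 : 0 ≤ ξ) (hξ1 : ξ ≤ 1) :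
    ∀ y z q p, 0 < b q m → 0 < b p m →
      (c y q - c y m - c z q + c z m) / b q m ^ ξ
        - (c y p - c y m - c z p + c z m) / b p m ^ ξ
        ≤ 2 ^ ξ * a y z * b q p ^ (1 - ξ) :=
  stmt_18_general b a c m ξ hb_symm hb_tri ha_nonneg hquad hξ0 hξ1
end
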